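/- arXiv:gr-qc/0601022 — 3 statements merged into one kernel-verified Lean document; each statement's English description precedes it below -/
import Mathlib

section
/- Let c, d, M, a₂ be smooth functions of (u, θ, ψ), 2π-periodic in ψ, with a₂ independent of u. Set l = ∂_θ c + 2c cot θ + (∂_ψ d) csc θ and l̄ = ∂_θ d + 2d cot θ − (∂_ψ c) csc θ, and assume the Bondi supplementary equation ∂_u M = −((∂_u c)² + (∂_u d)²) + ½ ∂_u (∂_θ l + l cot θ + (∂_ψ l̄) csc θ). Assume all boundary terms at θ = 0, π vanish in the limit u → −∞ and smoothness/periodicity justify integration by parts. Then lim_{u→−∞} ∫₀^π ∫₀^{2π} ( (∂_θ a₂) sin θ ∂_u l + (∂_ψ a₂) ∂_u l̄ ) dψ dθ = −2 lim_{u→−∞} ∫₀^π ∫₀^{2π} a₂ ( ∂_u M + (∂_u c)² + (∂_u d)² ) sin θ dψ dθ, provided the limits exist. -/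
open Real MeasureTheory Filter


noncomputable def EPI.pd (v : ℝ × ℝ × ℝ) (F : ℝ × ℝ × ℝ → ℝ) : ℝ × ℝ × ℝ → ℝ :=
  fun p => fderiv ℝ F p v

namespace EPI

variable {F : ℝ × ℝ × ℝ → ℝ}

lemma contDiff_pd (hF : ContDiff ℝ (⊤ : ℕ∞) F) (v : ℝ × ℝ × ℝ) : ContDiff ℝ (⊤ : ℕ∞) (pd v F) :=
  (ContinuousLinearMap.apply ℝ ℝ v).contDiff.comp (hF.fderiv_right (by simp))

lemma hasDerivAt_pd1 (hF : ContDiff ℝ (⊤ : ℕ∞) F) (u θ ψ : ℝ) :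
    HasDerivAt (fun t => F (t, θ, ψ)) (pd (1,0,0) F (u,θ,ψ)) u := by
  have h1 : HasDerivAt (fun t : ℝ => ((t, θ, ψ) : ℝ × ℝ × ℝ)) (1,0,0) u :=
    (hasDerivAt_id u).prodMk ((hasDerivAt_const u θ).prodMk (hasDerivAt_const u ψ))
  exact (hF.differentiable (by simp) (u,θ,ψ)).hasFDerivAt.comp_hasDerivAt u h1

lemma hasDerivAt_pd2 (hF : ContDiff ℝ (⊤ : ℕ∞) F) (u θ ψ : ℝ) :
    HasDerivAt (fun t => F (u, t, ψ)) (pd (0,1,0) F (u,θ,ψ)) θ := by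
  have h1 : HasDerivAt (fun t : ℝ => ((u, t, ψ) : ℝ × ℝ × ℝ)) (0,1,0) θ :=
    (hasDerivAt_const θ u).prodMk ((hasDerivAt_id θ).prodMk (hasDerivAt_const θ ψ))
  exact (hF.differentiable (by simp) (u,θ,ψ)).hasFDerivAt.comp_hasDerivAt θ h1

lemma hasDerivAt_pd3 (hF : ContDiff ℝ (⊤ : ℕ∞) F) (u θ ψ : ℝ) :
    HasDerivAt (fun t => F (u, θ, t)) (pd (0,0,1) F (u,θ,ψ)) ψ := by
  have h1 : HasDerivAt (fun t : ℝ => ((u, θ, t) : ℝ × ℝ × ℝ)) (0,0,1) ψ :=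
    (hasDerivAt_const ψ u).prodMk ((hasDerivAt_const ψ θ).prodMk (hasDerivAt_id ψ))
  exact (hF.differentiable (by simp) (u,θ,ψ)).hasFDerivAt.comp_hasDerivAt ψ h1

lemma pd_comm (hF : ContDiff ℝ (⊤ : ℕ∞) F) (v w : ℝ × ℝ × ℝ) (p : ℝ × ℝ × ℝ) :
    pd v (pd w F) p = pd w (pd v F) p := by
  have hdf : Differentiable ℝ (fderiv ℝ F) :=
    (hF.fderiv_right (m := (⊤ : ℕ∞)) (by simp)).differentiable (by simp)
  have h2 : HasFDerivAt (fderiv ℝ F) (fderiv ℝ (fderiv ℝ F) p) p := (hdf p).hasFDerivAt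
  have hsymm := second_derivative_symmetric (f := F)
    (fun q => (hF.differentiable (by simp) q).hasFDerivAt) h2
  have e1 : ∀ w v : ℝ × ℝ × ℝ, fderiv ℝ (fun q => fderiv ℝ F q w) p v
      = fderiv ℝ (fderiv ℝ F) p v w := by
    intro w v
    have h3 : fderiv ℝ (fun q => fderiv ℝ F q w) p
        = (ContinuousLinearMap.apply ℝ ℝ w).comp (fderiv ℝ (fderiv ℝ F) p) :=
      ((ContinuousLinearMap.apply ℝ ℝ w).hasFDerivAt.comp p h2).fderiv
    rw [h3]; rfl
  show fderiv ℝ (fun q => fderiv ℝ F q w) p v = fderiv ℝ (fun q => fderiv ℝ F q v) p w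
  rw [e1, e1]
  exact hsymm v w

lemma fderiv_translate (hF : ContDiff ℝ (⊤ : ℕ∞) F) (a : ℝ × ℝ × ℝ)
    (hper : ∀ p, F (p + a) = F p) (p : ℝ × ℝ × ℝ) :
    fderiv ℝ F (p + a) = fderiv ℝ F p := by
  have h1 : HasFDerivAt (fun q : ℝ × ℝ × ℝ => q + a)
      (ContinuousLinearMap.id ℝ (ℝ × ℝ × ℝ)) p := (hasFDerivAt_id p).add_const a
  have h2 := (hF.differentiable (by simp) (p + a)).hasFDerivAt.comp p h1
  have h3 : (fun q : ℝ × ℝ × ℝ => F (q + a)) = F := funext hper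
  rw [Function.comp_def, h3, ContinuousLinearMap.comp_id] at h2
  exact (h2.fderiv).symm

lemma pd_translate (hF : ContDiff ℝ (⊤ : ℕ∞) F) (v a : ℝ × ℝ × ℝ)
    (hper : ∀ p, F (p + a) = F p) (p : ℝ × ℝ × ℝ) :
    pd v F (p + a) = pd v F p := by
  simp only [pd, fderiv_translate hF a hper p]

end EPI

namespace EPI

noncomputable section

def C3 (c : ℝ → ℝ → ℝ → ℝ) : ℝ × ℝ × ℝ → ℝ := fun p => c p.1 p.2.1 p.2.2
def A3 (a₂ : ℝ → ℝ → ℝ) : ℝ × ℝ × ℝ → ℝ := fun p => a₂ p.2.1 p.2.2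
def HH (c d : ℝ → ℝ → ℝ → ℝ) : ℝ × ℝ × ℝ → ℝ := fun p =>
  Real.sin p.2.1 * pd (0,1,0) (C3 c) p + 2 * C3 c p * Real.cos p.2.1 + pd (0,0,1) (C3 d) p
def HB (c d : ℝ → ℝ → ℝ → ℝ) : ℝ × ℝ × ℝ → ℝ := fun p =>
  Real.sin p.2.1 * pd (0,1,0) (C3 d) p + 2 * C3 d p * Real.cos p.2.1 - pd (0,0,1) (C3 c) p
def PP (c d : ℝ → ℝ → ℝ → ℝ) : ℝ × ℝ × ℝ → ℝ := pd (1,0,0) (HH c d)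
def RR (c d : ℝ → ℝ → ℝ → ℝ) : ℝ × ℝ × ℝ → ℝ := pd (1,0,0) (HB c d)
def APf (a₂ : ℝ → ℝ → ℝ) (c d : ℝ → ℝ → ℝ → ℝ) : ℝ × ℝ × ℝ → ℝ :=
  fun p => A3 a₂ p * PP c d p
def ARf (a₂ : ℝ → ℝ → ℝ) (c d : ℝ → ℝ → ℝ → ℝ) : ℝ × ℝ × ℝ → ℝ :=
  fun p => A3 a₂ p * RR c d p

variable {c d : ℝ → ℝ → ℝ → ℝ} {a₂ : ℝ → ℝ → ℝ}

lemma contDiff_sin3 : ContDiff ℝ (⊤ : ℕ∞) (fun p : ℝ × ℝ × ℝ => Real.sin p.2.1) :=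
  Real.contDiff_sin.comp (contDiff_fst.comp contDiff_snd)

lemma contDiff_cos3 : ContDiff ℝ (⊤ : ℕ∞) (fun p : ℝ × ℝ × ℝ => Real.cos p.2.1) :=
  Real.contDiff_cos.comp (contDiff_fst.comp contDiff_snd)

lemma contDiff_A3 (ha₂ : ContDiff ℝ (⊤ : ℕ∞) (Function.uncurry a₂)) : ContDiff ℝ (⊤ : ℕ∞) (A3 a₂) :=
  ha₂.comp contDiff_snd

lemma contDiff_HH (hc : ContDiff ℝ (⊤ : ℕ∞) (C3 c)) (hd : ContDiff ℝ (⊤ : ℕ∞) (C3 d)) :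
    ContDiff ℝ (⊤ : ℕ∞) (HH c d) :=
  ((contDiff_sin3.mul (contDiff_pd hc _)).add
    (((contDiff_const.mul hc).mul contDiff_cos3))).add (contDiff_pd hd _)

lemma contDiff_HB (hc : ContDiff ℝ (⊤ : ℕ∞) (C3 c)) (hd : ContDiff ℝ (⊤ : ℕ∞) (C3 d)) :
    ContDiff ℝ (⊤ : ℕ∞) (HB c d) :=
  ((contDiff_sin3.mul (contDiff_pd hd _)).add
    (((contDiff_const.mul hd).mul contDiff_cos3))).sub (contDiff_pd hc _)

lemma contDiff_PP (hc : ContDiff ℝ (⊤ : ℕ∞) (C3 c)) (hd : ContDiff ℝ (⊤ : ℕ∞) (C3 d)) :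
    ContDiff ℝ (⊤ : ℕ∞) (PP c d) := contDiff_pd (contDiff_HH hc hd) _

lemma contDiff_RR (hc : ContDiff ℝ (⊤ : ℕ∞) (C3 c)) (hd : ContDiff ℝ (⊤ : ℕ∞) (C3 d)) :
    ContDiff ℝ (⊤ : ℕ∞) (RR c d) := contDiff_pd (contDiff_HB hc hd) _

lemma contDiff_APf (hc : ContDiff ℝ (⊤ : ℕ∞) (C3 c)) (hd : ContDiff ℝ (⊤ : ℕ∞) (C3 d))
    (ha₂ : ContDiff ℝ (⊤ : ℕ∞) (Function.uncurry a₂)) : ContDiff ℝ (⊤ : ℕ∞) (APf a₂ c d) :=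
  (contDiff_A3 ha₂).mul (contDiff_PP hc hd)

lemma contDiff_ARf (hc : ContDiff ℝ (⊤ : ℕ∞) (C3 c)) (hd : ContDiff ℝ (⊤ : ℕ∞) (C3 d))
    (ha₂ : ContDiff ℝ (⊤ : ℕ∞) (Function.uncurry a₂)) : ContDiff ℝ (⊤ : ℕ∞) (ARf a₂ c d) :=
  (contDiff_A3 ha₂).mul (contDiff_RR hc hd)

-- periodicity
lemma C3_per (hper : ∀ u θ ψ, c u θ (ψ + 2 * Real.pi) = c u θ ψ) :
    ∀ p : ℝ × ℝ × ℝ, C3 c (p + (0, 0, 2 * Real.pi)) = C3 c p := by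
  rintro ⟨x, y, z⟩
  show c (x + 0) (y + 0) (z + 2 * Real.pi) = c x y z
  rw [add_zero, add_zero]; exact hper x y z

lemma snd21_add (p : ℝ × ℝ × ℝ) : (p + ((0:ℝ), (0:ℝ), 2 * Real.pi)).2.1 = p.2.1 := by
  rcases p with ⟨x, y, z⟩; show y + 0 = y; rw [add_zero]

lemma HB_per (hc : ContDiff ℝ (⊤ : ℕ∞) (C3 c)) (hd : ContDiff ℝ (⊤ : ℕ∞) (C3 d))
    (hcper : ∀ u θ ψ, c u θ (ψ + 2 * Real.pi) = c u θ ψ)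
    (hdper : ∀ u θ ψ, d u θ (ψ + 2 * Real.pi) = d u θ ψ) :
    ∀ p : ℝ × ℝ × ℝ, HB c d (p + (0, 0, 2 * Real.pi)) = HB c d p := by
  intro p
  simp only [HB]
  rw [snd21_add, pd_translate hd _ _ (C3_per hdper) p,
    pd_translate hc _ _ (C3_per hcper) p, C3_per hdper p]

lemma RR_per (hc : ContDiff ℝ (⊤ : ℕ∞) (C3 c)) (hd : ContDiff ℝ (⊤ : ℕ∞) (C3 d))
    (hcper : ∀ u θ ψ, c u θ (ψ + 2 * Real.pi) = c u θ ψ)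
    (hdper : ∀ u θ ψ, d u θ (ψ + 2 * Real.pi) = d u θ ψ) :
    ∀ p : ℝ × ℝ × ℝ, RR c d (p + (0, 0, 2 * Real.pi)) = RR c d p :=
  fun p => pd_translate (contDiff_HB hc hd) _ _ (HB_per hc hd hcper hdper) p

lemma ARf_per (hc : ContDiff ℝ (⊤ : ℕ∞) (C3 c)) (hd : ContDiff ℝ (⊤ : ℕ∞) (C3 d))
    (hcper : ∀ u θ ψ, c u θ (ψ + 2 * Real.pi) = c u θ ψ)
    (hdper : ∀ u θ ψ, d u θ (ψ + 2 * Real.pi) = d u θ ψ)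
    (ha₂per : ∀ θ ψ, a₂ θ (ψ + 2 * Real.pi) = a₂ θ ψ) :
    ∀ p : ℝ × ℝ × ℝ, ARf a₂ c d (p + (0, 0, 2 * Real.pi)) = ARf a₂ c d p := by
  intro p
  simp only [ARf]
  rw [RR_per hc hd hcper hdper p]
  congr 1
  rcases p with ⟨x, y, z⟩
  show a₂ (y + 0) (z + 2 * Real.pi) = a₂ y z
  rw [add_zero]; exact ha₂per y z

-- boundary vanishing of HH and PP at θ = 0, π
lemma HH_zero (hd : ContDiff ℝ (⊤ : ℕ∞) (C3 d))
    (hc0 : ∀ u ψ, c u 0 ψ = 0) (hd0 : ∀ u ψ, deriv (fun p => d u 0 p) ψ = 0) :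
    ∀ v ψ, HH c d (v, 0, ψ) = 0 := by
  intro v ψ
  have hx : pd (0,0,1) (C3 d) (v, 0, ψ) = 0 := by
    rw [← (hasDerivAt_pd3 hd v 0 ψ).deriv]; exact hd0 v ψ
  have hy : C3 c (v, (0:ℝ), ψ) = 0 := hc0 v ψ
  simp only [HH, hx, hy]
  norm_num [Real.sin_zero]

lemma HH_pi (hd : ContDiff ℝ (⊤ : ℕ∞) (C3 d))
    (hcπ : ∀ u ψ, c u Real.pi ψ = 0) (hdπ : ∀ u ψ, deriv (fun p => d u Real.pi p) ψ = 0) :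
    ∀ v ψ, HH c d (v, Real.pi, ψ) = 0 := by
  intro v ψ
  have hx : pd (0,0,1) (C3 d) (v, Real.pi, ψ) = 0 := by
    rw [← (hasDerivAt_pd3 hd v Real.pi ψ).deriv]; exact hdπ v ψ
  have hy : C3 c (v, Real.pi, ψ) = 0 := hcπ v ψ
  simp only [HH, hx, hy]
  norm_num [Real.sin_pi]

lemma PP_zero (hc : ContDiff ℝ (⊤ : ℕ∞) (C3 c)) (hd : ContDiff ℝ (⊤ : ℕ∞) (C3 d))
    (hc0 : ∀ u ψ, c u 0 ψ = 0) (hd0 : ∀ u ψ, deriv (fun p => d u 0 p) ψ = 0) :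
    ∀ u ψ, PP c d (u, 0, ψ) = 0 := by
  intro u ψ
  rw [show PP c d (u, 0, ψ) = pd (1,0,0) (HH c d) (u,0,ψ) from rfl,
    ← (hasDerivAt_pd1 (contDiff_HH hc hd) u 0 ψ).deriv]
  have : (fun t => HH c d (t, 0, ψ)) = fun _ => (0:ℝ) :=
    funext fun t => HH_zero hd hc0 hd0 t ψ
  rw [this, deriv_const]

lemma PP_pi (hc : ContDiff ℝ (⊤ : ℕ∞) (C3 c)) (hd : ContDiff ℝ (⊤ : ℕ∞) (C3 d))
    (hcπ : ∀ u ψ, c u Real.pi ψ = 0) (hdπ : ∀ u ψ, deriv (fun p => d u Real.pi p) ψ = 0) :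
    ∀ u ψ, PP c d (u, Real.pi, ψ) = 0 := by
  intro u ψ
  rw [show PP c d (u, Real.pi, ψ) = pd (1,0,0) (HH c d) (u,Real.pi,ψ) from rfl,
    ← (hasDerivAt_pd1 (contDiff_HH hc hd) u Real.pi ψ).deriv]
  have : (fun t => HH c d (t, Real.pi, ψ)) = fun _ => (0:ℝ) :=
    funext fun t => HH_pi hd hcπ hdπ t ψ
  rw [this, deriv_const]

end
end EPI

namespace EPI

variable {c d : ℝ → ℝ → ℝ → ℝ} {a₂ : ℝ → ℝ → ℝ}

lemma cont_slice3 (G : ℝ × ℝ × ℝ → ℝ) (hG : ContDiff ℝ (⊤ : ℕ∞) G) (u θ : ℝ) :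
    Continuous fun ψ => G (u, θ, ψ) :=
  hG.continuous.comp (continuous_const.prodMk (continuous_const.prodMk continuous_id))

lemma cont_slice2 (G : ℝ × ℝ × ℝ → ℝ) (hG : ContDiff ℝ (⊤ : ℕ∞) G) (u ψ : ℝ) :
    Continuous fun θ => G (u, θ, ψ) :=
  hG.continuous.comp (continuous_const.prodMk (continuous_id.prodMk continuous_const))

lemma cont_slice23 (G : ℝ × ℝ × ℝ → ℝ) (hG : ContDiff ℝ (⊤ : ℕ∞) G) (u : ℝ) :
    Continuous fun q : ℝ × ℝ => G (u, q.1, q.2) :=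
  hG.continuous.comp (continuous_const.prodMk (continuous_fst.prodMk continuous_snd))

lemma AR_psi_integral_zero (hc : ContDiff ℝ (⊤ : ℕ∞) (C3 c)) (hd : ContDiff ℝ (⊤ : ℕ∞) (C3 d))
    (ha₂ : ContDiff ℝ (⊤ : ℕ∞) (Function.uncurry a₂))
    (hcper : ∀ u θ ψ, c u θ (ψ + 2 * Real.pi) = c u θ ψ)
    (hdper : ∀ u θ ψ, d u θ (ψ + 2 * Real.pi) = d u θ ψ)
    (ha₂per : ∀ θ ψ, a₂ θ (ψ + 2 * Real.pi) = a₂ θ ψ) (u θ : ℝ) :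
    ∫ ψ in (0:ℝ)..(2 * Real.pi), pd (0,0,1) (ARf a₂ c d) (u, θ, ψ) = 0 := by
  have hAR := contDiff_ARf hc hd ha₂
  rw [intervalIntegral.integral_eq_sub_of_hasDerivAt (f := fun ψ => ARf a₂ c d (u, θ, ψ))
    (fun x _ => hasDerivAt_pd3 hAR u θ x)
    ((cont_slice3 _ (contDiff_pd hAR _) u θ).intervalIntegrable _ _)]
  have h1 := ARf_per hc hd hcper hdper ha₂per (u, θ, 0)
  have e : ((u, θ, (0:ℝ)) : ℝ × ℝ × ℝ) + (0, 0, 2 * Real.pi) = (u, θ, 2 * Real.pi) := by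
    show ((u + 0, θ + 0, 0 + 2 * Real.pi) : ℝ × ℝ × ℝ) = _
    rw [add_zero, add_zero, zero_add]
  rw [e] at h1
  rw [h1, sub_self]

lemma AP_theta_integral_zero (hc : ContDiff ℝ (⊤ : ℕ∞) (C3 c)) (hd : ContDiff ℝ (⊤ : ℕ∞) (C3 d))
    (ha₂ : ContDiff ℝ (⊤ : ℕ∞) (Function.uncurry a₂))
    (hc0 : ∀ u ψ, c u 0 ψ = 0) (hcπ : ∀ u ψ, c u Real.pi ψ = 0)
    (hd0 : ∀ u ψ, deriv (fun p => d u 0 p) ψ = 0)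
    (hdπ : ∀ u ψ, deriv (fun p => d u Real.pi p) ψ = 0) (u ψ : ℝ) :
    ∫ θ in (0:ℝ)..Real.pi, pd (0,1,0) (APf a₂ c d) (u, θ, ψ) = 0 := by
  have hAP := contDiff_APf hc hd ha₂
  rw [intervalIntegral.integral_eq_sub_of_hasDerivAt (f := fun θ => APf a₂ c d (u, θ, ψ))
    (fun x _ => hasDerivAt_pd2 hAP u x ψ)
    ((cont_slice2 _ (contDiff_pd hAP _) u ψ).intervalIntegrable _ _)]
  simp only [APf]
  rw [PP_pi hc hd hcπ hdπ u ψ, PP_zero hc hd hc0 hd0 u ψ]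
  ring

end EPI

namespace EPI

open MeasureTheory in
lemma AP_fubini {c d : ℝ → ℝ → ℝ → ℝ} {a₂ : ℝ → ℝ → ℝ}
    (hc : ContDiff ℝ (⊤ : ℕ∞) (C3 c)) (hd : ContDiff ℝ (⊤ : ℕ∞) (C3 d))
    (ha₂ : ContDiff ℝ (⊤ : ℕ∞) (Function.uncurry a₂))
    (hc0 : ∀ u ψ, c u 0 ψ = 0) (hcπ : ∀ u ψ, c u Real.pi ψ = 0)
    (hd0 : ∀ u ψ, deriv (fun p => d u 0 p) ψ = 0)
    (hdπ : ∀ u ψ, deriv (fun p => d u Real.pi p) ψ = 0) (u : ℝ) :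
    (∫ θ in (0:ℝ)..Real.pi, ∫ ψ in (0:ℝ)..(2 * Real.pi),
        pd (0,1,0) (APf a₂ c d) (u, θ, ψ)) = 0 ∧
    IntervalIntegrable (fun θ => ∫ ψ in (0:ℝ)..(2 * Real.pi),
        pd (0,1,0) (APf a₂ c d) (u, θ, ψ)) volume 0 Real.pi := by
  have hcont : Continuous (fun q : ℝ × ℝ => pd (0,1,0) (APf a₂ c d) (u, q.1, q.2)) :=
    cont_slice23 _ (contDiff_pd (contDiff_APf hc hd ha₂) _) u
  have hint : Integrable (fun q : ℝ × ℝ => pd (0,1,0) (APf a₂ c d) (u, q.1, q.2))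
      ((volume.restrict (Set.Ioc (0:ℝ) Real.pi)).prod
        (volume.restrict (Set.Ioc (0:ℝ) (2 * Real.pi)))) := by
    rw [Measure.prod_restrict, ← Measure.volume_eq_prod]
    exact (hcont.continuousOn.integrableOn_compact
      (isCompact_Icc.prod isCompact_Icc)).mono_set
      (Set.prod_mono Set.Ioc_subset_Icc_self Set.Ioc_subset_Icc_self)
  have einner : (fun θ => ∫ ψ in (0:ℝ)..(2 * Real.pi), pd (0,1,0) (APf a₂ c d) (u, θ, ψ))
      = fun θ => ∫ ψ in Set.Ioc (0:ℝ) (2 * Real.pi), pd (0,1,0) (APf a₂ c d) (u, θ, ψ) :=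
    funext fun θ => intervalIntegral.integral_of_le (by positivity)
  have hinner : IntervalIntegrable (fun θ => ∫ ψ in (0:ℝ)..(2 * Real.pi),
      pd (0,1,0) (APf a₂ c d) (u, θ, ψ)) volume 0 Real.pi := by
    rw [intervalIntegrable_iff, Set.uIoc_of_le Real.pi_pos.le, einner]
    exact hint.integral_prod_left
  refine ⟨?_, hinner⟩
  rw [einner, intervalIntegral.integral_of_le Real.pi_pos.le]
  have hswap := integral_integral_swap
    (f := fun θ ψ => pd (0,1,0) (APf a₂ c d) (u, θ, ψ)) hint
  rw [hswap]
  have : (fun ψ => ∫ θ in Set.Ioc (0:ℝ) Real.pi, pd (0,1,0) (APf a₂ c d) (u, θ, ψ))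
      = fun _ => (0:ℝ) := by
    funext ψ
    rw [← intervalIntegral.integral_of_le Real.pi_pos.le]
    exact AP_theta_integral_zero hc hd ha₂ hc0 hcπ hd0 hdπ u ψ
  rw [this, integral_zero]

end EPI

namespace EPI

open Real in
lemma pointwise_identity {c d M l lb : ℝ → ℝ → ℝ → ℝ} {a₂ : ℝ → ℝ → ℝ}
    (hc : ContDiff ℝ (⊤ : ℕ∞) (C3 c)) (hd : ContDiff ℝ (⊤ : ℕ∞) (C3 d)) (hM : ContDiff ℝ (⊤ : ℕ∞) (C3 M))
    (ha₂ : ContDiff ℝ (⊤ : ℕ∞) (Function.uncurry a₂))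
    (hl : ∀ u θ ψ, l u θ ψ =
      deriv (fun t => c u t ψ) θ + 2 * c u θ ψ * (Real.cos θ / Real.sin θ)
        + deriv (fun p => d u θ p) ψ / Real.sin θ)
    (hlb : ∀ u θ ψ, lb u θ ψ =
      deriv (fun t => d u t ψ) θ + 2 * d u θ ψ * (Real.cos θ / Real.sin θ)
        - deriv (fun p => c u θ p) ψ / Real.sin θ)
    (hBondi : ∀ u θ ψ,
      deriv (fun v => M v θ ψ) u =
        -((deriv (fun v => c v θ ψ) u) ^ 2 + (deriv (fun v => d v θ ψ) u) ^ 2)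
        + (1 / 2) * deriv (fun v =>
            deriv (fun t => l v t ψ) θ + l v θ ψ * (Real.cos θ / Real.sin θ)
              + deriv (fun p => lb v θ p) ψ / Real.sin θ) u)
    (u θ ψ : ℝ) (hs : Real.sin θ ≠ 0) :
    deriv (fun t => a₂ t ψ) θ * Real.sin θ * deriv (fun v => l v θ ψ) u
      + deriv (fun p => a₂ θ p) ψ * deriv (fun v => lb v θ ψ) u
    = -2 * (a₂ θ ψ * (pd (1,0,0) (C3 M) (u,θ,ψ) + pd (1,0,0) (C3 c) (u,θ,ψ) ^ 2
          + pd (1,0,0) (C3 d) (u,θ,ψ) ^ 2) * Real.sin θ)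
      + pd (0,1,0) (APf a₂ c d) (u,θ,ψ)
      + pd (0,0,1) (ARf a₂ c d) (u,θ,ψ) / Real.sin θ := by
  have hlH : ∀ v t ψ', Real.sin t ≠ 0 → l v t ψ' = HH c d (v,t,ψ') / Real.sin t := by
    intro v t ψ' hst
    have ec : deriv (fun x => c v x ψ') t = pd (0,1,0) (C3 c) (v,t,ψ') :=
      (hasDerivAt_pd2 hc v t ψ').deriv
    have ed : deriv (fun p => d v t p) ψ' = pd (0,0,1) (C3 d) (v,t,ψ') :=
      (hasDerivAt_pd3 hd v t ψ').deriv
    rw [hl, ec, ed]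
    show _ = (Real.sin t * pd (0,1,0) (C3 c) (v,t,ψ') + 2 * c v t ψ' * Real.cos t
      + pd (0,0,1) (C3 d) (v,t,ψ')) / Real.sin t
    field_simp
  have hlbH : ∀ v t ψ', Real.sin t ≠ 0 → lb v t ψ' = HB c d (v,t,ψ') / Real.sin t := by
    intro v t ψ' hst
    have ed : deriv (fun x => d v x ψ') t = pd (0,1,0) (C3 d) (v,t,ψ') :=
      (hasDerivAt_pd2 hd v t ψ').deriv
    have ec : deriv (fun p => c v t p) ψ' = pd (0,0,1) (C3 c) (v,t,ψ') :=
      (hasDerivAt_pd3 hc v t ψ').deriv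
    rw [hlb, ed, ec]
    show _ = (Real.sin t * pd (0,1,0) (C3 d) (v,t,ψ') + 2 * d v t ψ' * Real.cos t
      - pd (0,0,1) (C3 c) (v,t,ψ')) / Real.sin t
    field_simp
  have hderivul : deriv (fun v => l v θ ψ) u = PP c d (u,θ,ψ) / Real.sin θ := by
    have e : (fun v => l v θ ψ) = fun v => HH c d (v,θ,ψ) / Real.sin θ :=
      funext fun v => hlH v θ ψ hs
    have eH : deriv (fun v => HH c d (v,θ,ψ)) u = PP c d (u,θ,ψ) :=
      (hasDerivAt_pd1 (contDiff_HH hc hd) u θ ψ).deriv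
    rw [e, deriv_div_const, eH]
  have hderivulb : deriv (fun v => lb v θ ψ) u = RR c d (u,θ,ψ) / Real.sin θ := by
    have e : (fun v => lb v θ ψ) = fun v => HB c d (v,θ,ψ) / Real.sin θ :=
      funext fun v => hlbH v θ ψ hs
    have eH : deriv (fun v => HB c d (v,θ,ψ)) u = RR c d (u,θ,ψ) :=
      (hasDerivAt_pd1 (contDiff_HB hc hd) u θ ψ).deriv
    rw [e, deriv_div_const, eH]
  have hdpsilb : ∀ v, deriv (fun p => lb v θ p) ψ
      = pd (0,0,1) (HB c d) (v,θ,ψ) / Real.sin θ := by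
    intro v
    have e : (fun p => lb v θ p) = fun p => HB c d (v,θ,p) / Real.sin θ :=
      funext fun p => hlbH v θ p hs
    have eH : deriv (fun p => HB c d (v,θ,p)) ψ = pd (0,0,1) (HB c d) (v,θ,ψ) :=
      (hasDerivAt_pd3 (contDiff_HB hc hd) v θ ψ).deriv
    rw [e, deriv_div_const, eH]
  have hdthl : ∀ v, deriv (fun t => l v t ψ) θ =
      (pd (0,1,0) (HH c d) (v,θ,ψ) * Real.sin θ - HH c d (v,θ,ψ) * Real.cos θ)
        / Real.sin θ ^ 2 := by
    intro v
    have hop : IsOpen {t : ℝ | Real.sin t ≠ 0} :=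
      isOpen_compl_singleton.preimage Real.continuous_sin
    have hev : (fun t => l v t ψ) =ᶠ[nhds θ] fun t => HH c d (v,t,ψ) / Real.sin t := by
      filter_upwards [hop.mem_nhds hs] with t ht using hlH v t ψ ht
    rw [hev.deriv_eq]
    exact ((hasDerivAt_pd2 (contDiff_HH hc hd) v θ ψ).div (Real.hasDerivAt_sin θ) hs).deriv
  have hK : ∀ v, deriv (fun t => l v t ψ) θ + l v θ ψ * (Real.cos θ / Real.sin θ)
      + deriv (fun p => lb v θ p) ψ / Real.sin θ
      = pd (0,1,0) (HH c d) (v,θ,ψ) / Real.sin θ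
        + pd (0,0,1) (HB c d) (v,θ,ψ) / Real.sin θ ^ 2 := by
    intro v
    rw [hdthl v, hlH v θ ψ hs, hdpsilb v]
    field_simp
    ring
  have hderivK : deriv (fun v => deriv (fun t => l v t ψ) θ
        + l v θ ψ * (Real.cos θ / Real.sin θ)
        + deriv (fun p => lb v θ p) ψ / Real.sin θ) u
      = pd (1,0,0) (pd (0,1,0) (HH c d)) (u,θ,ψ) / Real.sin θ
        + pd (1,0,0) (pd (0,0,1) (HB c d)) (u,θ,ψ) / Real.sin θ ^ 2 := by
    rw [funext hK]
    exact (((hasDerivAt_pd1 (contDiff_pd (contDiff_HH hc hd) _) u θ ψ).div_const _).add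
      ((hasDerivAt_pd1 (contDiff_pd (contDiff_HB hc hd) _) u θ ψ).div_const _)).deriv
  have hb := hBondi u θ ψ
  have eM : deriv (fun v => M v θ ψ) u = pd (1,0,0) (C3 M) (u,θ,ψ) :=
    (hasDerivAt_pd1 hM u θ ψ).deriv
  have eC : deriv (fun v => c v θ ψ) u = pd (1,0,0) (C3 c) (u,θ,ψ) :=
    (hasDerivAt_pd1 hc u θ ψ).deriv
  have eD : deriv (fun v => d v θ ψ) u = pd (1,0,0) (C3 d) (u,θ,ψ) :=
    (hasDerivAt_pd1 hd u θ ψ).deriv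
  rw [eM, eC, eD, hderivK] at hb
  have e1 : deriv (fun t => a₂ t ψ) θ = pd (0,1,0) (A3 a₂) (u,θ,ψ) :=
    (hasDerivAt_pd2 (contDiff_A3 ha₂) u θ ψ).deriv
  have e2 : deriv (fun p => a₂ θ p) ψ = pd (0,0,1) (A3 a₂) (u,θ,ψ) :=
    (hasDerivAt_pd3 (contDiff_A3 ha₂) u θ ψ).deriv
  have eAP : pd (0,1,0) (APf a₂ c d) (u,θ,ψ)
      = pd (0,1,0) (A3 a₂) (u,θ,ψ) * PP c d (u,θ,ψ)
        + A3 a₂ (u,θ,ψ) * pd (0,1,0) (PP c d) (u,θ,ψ) :=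
    (hasDerivAt_pd2 (contDiff_APf hc hd ha₂) u θ ψ).unique
      ((hasDerivAt_pd2 (contDiff_A3 ha₂) u θ ψ).mul
        (hasDerivAt_pd2 (contDiff_PP hc hd) u θ ψ))
  have eAR : pd (0,0,1) (ARf a₂ c d) (u,θ,ψ)
      = pd (0,0,1) (A3 a₂) (u,θ,ψ) * RR c d (u,θ,ψ)
        + A3 a₂ (u,θ,ψ) * pd (0,0,1) (RR c d) (u,θ,ψ) :=
    (hasDerivAt_pd3 (contDiff_ARf hc hd ha₂) u θ ψ).unique
      ((hasDerivAt_pd3 (contDiff_A3 ha₂) u θ ψ).mul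
        (hasDerivAt_pd3 (contDiff_RR hc hd) u θ ψ))
  have ecomm1 : pd (0,1,0) (PP c d) (u,θ,ψ)
      = pd (1,0,0) (pd (0,1,0) (HH c d)) (u,θ,ψ) :=
    pd_comm (contDiff_HH hc hd) _ _ _
  have ecomm2 : pd (0,0,1) (RR c d) (u,θ,ψ)
      = pd (1,0,0) (pd (0,0,1) (HB c d)) (u,θ,ψ) :=
    pd_comm (contDiff_HB hc hd) _ _ _
  rw [e1, e2, hderivul, hderivulb, eAP, eAR, ecomm1, ecomm2,
    show A3 a₂ (u,θ,ψ) = a₂ θ ψ from rfl, hb]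
  field_simp
  ring

end EPI

namespace EPI

open MeasureTheory in
lemma key {c d M l lb : ℝ → ℝ → ℝ → ℝ} {a₂ : ℝ → ℝ → ℝ}
    (hc : ContDiff ℝ (⊤ : ℕ∞) (C3 c)) (hd : ContDiff ℝ (⊤ : ℕ∞) (C3 d)) (hM : ContDiff ℝ (⊤ : ℕ∞) (C3 M))
    (ha₂ : ContDiff ℝ (⊤ : ℕ∞) (Function.uncurry a₂))
    (hcper : ∀ u θ ψ, c u θ (ψ + 2 * Real.pi) = c u θ ψ)
    (hdper : ∀ u θ ψ, d u θ (ψ + 2 * Real.pi) = d u θ ψ)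
    (ha₂per : ∀ θ ψ, a₂ θ (ψ + 2 * Real.pi) = a₂ θ ψ)
    (hl : ∀ u θ ψ, l u θ ψ =
      deriv (fun t => c u t ψ) θ + 2 * c u θ ψ * (Real.cos θ / Real.sin θ)
        + deriv (fun p => d u θ p) ψ / Real.sin θ)
    (hlb : ∀ u θ ψ, lb u θ ψ =
      deriv (fun t => d u t ψ) θ + 2 * d u θ ψ * (Real.cos θ / Real.sin θ)
        - deriv (fun p => c u θ p) ψ / Real.sin θ)
    (hBondi : ∀ u θ ψ,
      deriv (fun v => M v θ ψ) u =
        -((deriv (fun v => c v θ ψ) u) ^ 2 + (deriv (fun v => d v θ ψ) u) ^ 2)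
        + (1 / 2) * deriv (fun v =>
            deriv (fun t => l v t ψ) θ + l v θ ψ * (Real.cos θ / Real.sin θ)
              + deriv (fun p => lb v θ p) ψ / Real.sin θ) u)
    (hc0 : ∀ u ψ, c u 0 ψ = 0) (hcπ : ∀ u ψ, c u Real.pi ψ = 0)
    (hd0 : ∀ u ψ, deriv (fun p => d u 0 p) ψ = 0)
    (hdπ : ∀ u ψ, deriv (fun p => d u Real.pi p) ψ = 0) (u : ℝ) :
    (∫ θ in (0:ℝ)..Real.pi, ∫ ψ in (0:ℝ)..(2 * Real.pi),
        (deriv (fun t => a₂ t ψ) θ * Real.sin θ * deriv (fun v => l v θ ψ) u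
          + deriv (fun p => a₂ θ p) ψ * deriv (fun v => lb v θ ψ) u))
    = -2 * ∫ θ in (0:ℝ)..Real.pi, ∫ ψ in (0:ℝ)..(2 * Real.pi),
        a₂ θ ψ * (deriv (fun v => M v θ ψ) u
          + (deriv (fun v => c v θ ψ) u) ^ 2
          + (deriv (fun v => d v θ ψ) u) ^ 2) * Real.sin θ := by
  have eM : ∀ (u' θ ψ : ℝ), deriv (fun v => M v θ ψ) u' = pd (1,0,0) (C3 M) (u',θ,ψ) :=
    fun u' θ ψ => (hasDerivAt_pd1 hM u' θ ψ).deriv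
  have eC : ∀ (u' θ ψ : ℝ), deriv (fun v => c v θ ψ) u' = pd (1,0,0) (C3 c) (u',θ,ψ) :=
    fun u' θ ψ => (hasDerivAt_pd1 hc u' θ ψ).deriv
  have eD : ∀ (u' θ ψ : ℝ), deriv (fun v => d v θ ψ) u' = pd (1,0,0) (C3 d) (u',θ,ψ) :=
    fun u' θ ψ => (hasDerivAt_pd1 hd u' θ ψ).deriv
  simp only [eM, eC, eD]
  -- per-θ identity on the open interval
  have hθid : ∀ θ ∈ Set.Ioo (0:ℝ) Real.pi,
      (∫ ψ in (0:ℝ)..(2 * Real.pi),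
        (deriv (fun t => a₂ t ψ) θ * Real.sin θ * deriv (fun v => l v θ ψ) u
          + deriv (fun p => a₂ θ p) ψ * deriv (fun v => lb v θ ψ) u))
      = -2 * (∫ ψ in (0:ℝ)..(2 * Real.pi),
            a₂ θ ψ * (pd (1,0,0) (C3 M) (u,θ,ψ) + pd (1,0,0) (C3 c) (u,θ,ψ) ^ 2
              + pd (1,0,0) (C3 d) (u,θ,ψ) ^ 2) * Real.sin θ)
        + ∫ ψ in (0:ℝ)..(2 * Real.pi), pd (0,1,0) (APf a₂ c d) (u,θ,ψ) := by
    intro θ hθmem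
    have hs : Real.sin θ ≠ 0 := ne_of_gt (Real.sin_pos_of_pos_of_lt_pi hθmem.1 hθmem.2)
    have e : (fun ψ => deriv (fun t => a₂ t ψ) θ * Real.sin θ * deriv (fun v => l v θ ψ) u
          + deriv (fun p => a₂ θ p) ψ * deriv (fun v => lb v θ ψ) u)
        = fun ψ => -2 * (a₂ θ ψ * (pd (1,0,0) (C3 M) (u,θ,ψ) + pd (1,0,0) (C3 c) (u,θ,ψ) ^ 2
              + pd (1,0,0) (C3 d) (u,θ,ψ) ^ 2) * Real.sin θ)
            + pd (0,1,0) (APf a₂ c d) (u,θ,ψ)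
            + pd (0,0,1) (ARf a₂ c d) (u,θ,ψ) / Real.sin θ :=
      funext fun ψ => pointwise_identity hc hd hM ha₂ hl hlb hBondi u θ ψ hs
    have cg : Continuous (fun ψ => a₂ θ ψ * (pd (1,0,0) (C3 M) (u,θ,ψ)
        + pd (1,0,0) (C3 c) (u,θ,ψ) ^ 2 + pd (1,0,0) (C3 d) (u,θ,ψ) ^ 2) * Real.sin θ) := by
      refine Continuous.mul (Continuous.mul ?_ ?_) continuous_const
      · exact ha₂.continuous.comp (continuous_const.prodMk continuous_id)
      · exact ((cont_slice3 _ (contDiff_pd hM _) u θ).add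
          ((cont_slice3 _ (contDiff_pd hc _) u θ).pow 2)).add
          ((cont_slice3 _ (contDiff_pd hd _) u θ).pow 2)
    have cAP : Continuous (fun ψ => pd (0,1,0) (APf a₂ c d) (u,θ,ψ)) :=
      cont_slice3 _ (contDiff_pd (contDiff_APf hc hd ha₂) _) u θ
    have cAR : Continuous (fun ψ => pd (0,0,1) (ARf a₂ c d) (u,θ,ψ) / Real.sin θ) :=
      (cont_slice3 _ (contDiff_pd (contDiff_ARf hc hd ha₂) _) u θ).div_const _
    rw [e, intervalIntegral.integral_add
        (((continuous_const.fun_mul cg).fun_add cAP).intervalIntegrable _ _)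
        (cAR.intervalIntegrable _ _),
      intervalIntegral.integral_add
        ((continuous_const.fun_mul cg).intervalIntegrable _ _) (cAP.intervalIntegrable _ _),
      intervalIntegral.integral_div,
      AR_psi_integral_zero hc hd ha₂ hcper hdper ha₂per u θ, zero_div, add_zero,
      intervalIntegral.integral_const_mul]
  have hAE : ∀ᵐ θ' ∂(volume : Measure ℝ), θ' ∈ Set.uIoc (0:ℝ) Real.pi →
      (∫ ψ in (0:ℝ)..(2 * Real.pi),
        (deriv (fun t => a₂ t ψ) θ' * Real.sin θ' * deriv (fun v => l v θ' ψ) u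
          + deriv (fun p => a₂ θ' p) ψ * deriv (fun v => lb v θ' ψ) u))
      = -2 * (∫ ψ in (0:ℝ)..(2 * Real.pi),
            a₂ θ' ψ * (pd (1,0,0) (C3 M) (u,θ',ψ) + pd (1,0,0) (C3 c) (u,θ',ψ) ^ 2
              + pd (1,0,0) (C3 d) (u,θ',ψ) ^ 2) * Real.sin θ')
        + ∫ ψ in (0:ℝ)..(2 * Real.pi), pd (0,1,0) (APf a₂ c d) (u,θ',ψ) := by
    filter_upwards [compl_mem_ae_iff.mpr (measure_singleton Real.pi)] with θ' hππ hmem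
    rw [Set.uIoc_of_le Real.pi_pos.le] at hmem
    exact hθid θ' ⟨hmem.1, lt_of_le_of_ne hmem.2 (by simpa using hππ)⟩
  obtain ⟨hEzero, hEint⟩ := AP_fubini hc hd ha₂ hc0 hcπ hd0 hdπ u
  by_cases hGi : IntervalIntegrable (fun θ => ∫ ψ in (0:ℝ)..(2 * Real.pi),
      a₂ θ ψ * (pd (1,0,0) (C3 M) (u,θ,ψ) + pd (1,0,0) (C3 c) (u,θ,ψ) ^ 2
        + pd (1,0,0) (C3 d) (u,θ,ψ) ^ 2) * Real.sin θ) volume 0 Real.pi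
  · rw [intervalIntegral.integral_congr_ae hAE,
      intervalIntegral.integral_add (hGi.const_mul (-2)) hEint, hEzero, add_zero,
      intervalIntegral.integral_const_mul]
  · rw [intervalIntegral.integral_undef hGi, mul_zero]
    have hFni : ¬ IntervalIntegrable (fun θ => ∫ ψ in (0:ℝ)..(2 * Real.pi),
        (deriv (fun t => a₂ t ψ) θ * Real.sin θ * deriv (fun v => l v θ ψ) u
          + deriv (fun p => a₂ θ p) ψ * deriv (fun v => lb v θ ψ) u)) volume 0 Real.pi := by
      intro hFi
      apply hGi
      have h2 : IntervalIntegrable (fun θ =>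
          ((∫ ψ in (0:ℝ)..(2 * Real.pi), pd (0,1,0) (APf a₂ c d) (u,θ,ψ))
            - ∫ ψ in (0:ℝ)..(2 * Real.pi),
              (deriv (fun t => a₂ t ψ) θ * Real.sin θ * deriv (fun v => l v θ ψ) u
                + deriv (fun p => a₂ θ p) ψ * deriv (fun v => lb v θ ψ) u)) / 2)
          volume 0 Real.pi := (hEint.sub hFi).div_const 2
      rw [intervalIntegrable_iff] at h2 ⊢
      apply h2.congr
      refine (MeasureTheory.ae_restrict_iff' measurableSet_uIoc).mpr ?_
      filter_upwards [hAE] with θ' h hmem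
      rw [h hmem]; ring
    rw [intervalIntegral.integral_undef hFni]

end EPI

/-- Key identity in the proof of Theorem 4.2: with `l, l̄` the Bondi auxiliary functions and
the supplementary (mass-aspect evolution) equation, integration by parts gives
`lim_{u→−∞} ∬ ((∂_θ a₂) sin θ ∂_u l + (∂_ψ a₂) ∂_u l̄) = −2 lim_{u→−∞} ∬ a₂ (∂_u M + (∂_u c)² + (∂_u d)²) sin θ`,
provided both limits exist. -/
theorem energy_perturbation_identity
    (c d M : ℝ → ℝ → ℝ → ℝ) (a₂ : ℝ → ℝ → ℝ) (l lb : ℝ → ℝ → ℝ → ℝ) (A B : ℝ)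
    (hc : ContDiff ℝ (⊤ : ℕ∞) (fun p : ℝ × ℝ × ℝ => c p.1 p.2.1 p.2.2))
    (hd : ContDiff ℝ (⊤ : ℕ∞) (fun p : ℝ × ℝ × ℝ => d p.1 p.2.1 p.2.2))
    (hM : ContDiff ℝ (⊤ : ℕ∞) (fun p : ℝ × ℝ × ℝ => M p.1 p.2.1 p.2.2))
    (ha₂ : ContDiff ℝ (⊤ : ℕ∞) (Function.uncurry a₂))
    (hcper : ∀ u θ ψ, c u θ (ψ + 2 * π) = c u θ ψ)
    (hdper : ∀ u θ ψ, d u θ (ψ + 2 * π) = d u θ ψ)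
    (hMper : ∀ u θ ψ, M u θ (ψ + 2 * π) = M u θ ψ)
    (ha₂per : ∀ θ ψ, a₂ θ (ψ + 2 * π) = a₂ θ ψ)
    (hl : ∀ u θ ψ, l u θ ψ =
      deriv (fun t => c u t ψ) θ + 2 * c u θ ψ * (Real.cos θ / Real.sin θ)
        + deriv (fun p => d u θ p) ψ / Real.sin θ)
    (hlb : ∀ u θ ψ, lb u θ ψ =
      deriv (fun t => d u t ψ) θ + 2 * d u θ ψ * (Real.cos θ / Real.sin θ)
        - deriv (fun p => c u θ p) ψ / Real.sin θ)
    -- the Bondi supplementary equation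
    (hBondi : ∀ u θ ψ,
      deriv (fun v => M v θ ψ) u =
        -((deriv (fun v => c v θ ψ) u) ^ 2 + (deriv (fun v => d v θ ψ) u) ^ 2)
        + (1 / 2) * deriv (fun v =>
            deriv (fun t => l v t ψ) θ + l v θ ψ * (Real.cos θ / Real.sin θ)
              + deriv (fun p => lb v θ p) ψ / Real.sin θ) u)
    -- vanishing of boundary terms at θ = 0, π
    (hc0 : ∀ u ψ, c u 0 ψ = 0) (hcπ : ∀ u ψ, c u π ψ = 0)
    (hd0 : ∀ u ψ, deriv (fun p => d u 0 p) ψ = 0)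
    (hdπ : ∀ u ψ, deriv (fun p => d u π p) ψ = 0)
    -- existence of the two limits
    (hA : Tendsto (fun u => ∫ θ in (0:ℝ)..π, ∫ ψ in (0:ℝ)..(2 * π),
        (deriv (fun t => a₂ t ψ) θ * Real.sin θ * deriv (fun v => l v θ ψ) u
          + deriv (fun p => a₂ θ p) ψ * deriv (fun v => lb v θ ψ) u)) atBot (nhds A))
    (hB : Tendsto (fun u => ∫ θ in (0:ℝ)..π, ∫ ψ in (0:ℝ)..(2 * π),
        a₂ θ ψ * (deriv (fun v => M v θ ψ) u
          + (deriv (fun v => c v θ ψ) u) ^ 2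
          + (deriv (fun v => d v θ ψ) u) ^ 2) * Real.sin θ) atBot (nhds B)) :
    A = -2 * B := by
  have hfun : (fun u => ∫ θ in (0:ℝ)..π, ∫ ψ in (0:ℝ)..(2 * π),
        (deriv (fun t => a₂ t ψ) θ * Real.sin θ * deriv (fun v => l v θ ψ) u
          + deriv (fun p => a₂ θ p) ψ * deriv (fun v => lb v θ ψ) u))
      = (fun u => -2 * ∫ θ in (0:ℝ)..π, ∫ ψ in (0:ℝ)..(2 * π),
        a₂ θ ψ * (deriv (fun v => M v θ ψ) u
          + (deriv (fun v => c v θ ψ) u) ^ 2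
          + (deriv (fun v => d v θ ψ) u) ^ 2) * Real.sin θ) :=
    funext fun u =>
      EPI.key hc hd hM ha₂ hcper hdper ha₂per hl hlb hBondi hc0 hcπ hd0 hdπ u
  rw [hfun] at hA
  exact tendsto_nhds_unique hA (hB.const_mul (-2))
end

section
/- Let M : ℝ × S² → ℝ be differentiable in u with ∂_u M = −((∂_u c)² + (∂_u d)²) + ½ ∂_u D, where D = ∂_θ l + l cot θ + (∂_ψ l̄) csc θ and ∫_{S²} D dS = 0 for all u (as in the previous statement). Define m₀(u) = (1/4π) ∫_{S²} M(u, θ, ψ) dS. Then m₀ is non-increasing in u: dm₀/du = −(1/4π) ∫_{S²} ((∂_u c)² + (∂_u d)²) dS ≤ 0. -/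
open Real MeasureTheory

private lemma deriv_eq_fderiv_aux (f : ℝ → ℝ → ℝ → ℝ)
    (hf : ContDiff ℝ (⊤ : ℕ∞) (fun p : ℝ × ℝ × ℝ => f p.1 p.2.1 p.2.2)) (u θ ψ : ℝ) :
    deriv (fun v => f v θ ψ) u
      = fderiv ℝ (fun p : ℝ × ℝ × ℝ => f p.1 p.2.1 p.2.2) (u, θ, ψ) (1, 0, 0) := by
  have hi : HasDerivAt (fun v : ℝ => (v, θ, ψ)) ((1:ℝ), (0:ℝ), (0:ℝ)) u :=
    (hasDerivAt_id u).prodMk (hasDerivAt_const u (θ, ψ))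
  have hF := (hf.differentiable (by simp) (u, θ, ψ)).hasFDerivAt
  exact (hF.comp_hasDerivAt u hi).deriv

private lemma cont_pderiv_aux (f : ℝ → ℝ → ℝ → ℝ)
    (hf : ContDiff ℝ (⊤ : ℕ∞) (fun p : ℝ × ℝ × ℝ => f p.1 p.2.1 p.2.2)) (u : ℝ) :
    Continuous (fun q : ℝ × ℝ => deriv (fun v => f v q.1 q.2) u) := by
  have h1 : Continuous (fun p : ℝ × ℝ × ℝ =>
      fderiv ℝ (fun p : ℝ × ℝ × ℝ => f p.1 p.2.1 p.2.2) p ((1:ℝ), (0:ℝ), (0:ℝ))) :=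
    (hf.continuous_fderiv (by simp)).clm_apply continuous_const
  have h2 : Continuous (fun q : ℝ × ℝ => ((u, q.1, q.2) : ℝ × ℝ × ℝ)) := by fun_prop
  have := h1.comp h2
  simpa only [Function.comp_def, ← deriv_eq_fderiv_aux f hf] using this

/-- Bondi mass loss formula: if `∂_u M = −((∂_u c)² + (∂_u d)²) + ½ ∂_u D` where the
divergence term `D` integrates to zero over the sphere for all `u`, then the Bondi mass
`m₀(u) = (1/4π)∫_{S²} M dS` satisfies
`dm₀/du = −(1/4π)∫_{S²}((∂_u c)² + (∂_u d)²) dS ≤ 0`. -/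
theorem bondi_mass_loss
    (M c d D : ℝ → ℝ → ℝ → ℝ) (m₀ : ℝ → ℝ)
    (hM : ContDiff ℝ (⊤ : ℕ∞) (fun p : ℝ × ℝ × ℝ => M p.1 p.2.1 p.2.2))
    (hc : ContDiff ℝ (⊤ : ℕ∞) (fun p : ℝ × ℝ × ℝ => c p.1 p.2.1 p.2.2))
    (hd : ContDiff ℝ (⊤ : ℕ∞) (fun p : ℝ × ℝ × ℝ => d p.1 p.2.1 p.2.2))
    (hD : ContDiff ℝ (⊤ : ℕ∞) (fun p : ℝ × ℝ × ℝ => D p.1 p.2.1 p.2.2))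
    (hEvol : ∀ u θ ψ,
      deriv (fun v => M v θ ψ) u =
        -((deriv (fun v => c v θ ψ) u) ^ 2 + (deriv (fun v => d v θ ψ) u) ^ 2)
          + (1 / 2) * deriv (fun v => D v θ ψ) u)
    (hDzero : ∀ u, (∫ θ in (0:ℝ)..π, ∫ ψ in (0:ℝ)..(2 * π), D u θ ψ * Real.sin θ) = 0)
    (hm₀ : ∀ u, m₀ u = (1 / (4 * π)) *
      ∫ θ in (0:ℝ)..π, ∫ ψ in (0:ℝ)..(2 * π), M u θ ψ * Real.sin θ)
    -- differentiation under the integral sign is assumed valid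
    (hDiffM : ∀ u, HasDerivAt
      (fun v => ∫ θ in (0:ℝ)..π, ∫ ψ in (0:ℝ)..(2 * π), M v θ ψ * Real.sin θ)
      (∫ θ in (0:ℝ)..π, ∫ ψ in (0:ℝ)..(2 * π), deriv (fun v => M v θ ψ) u * Real.sin θ) u)
    (hDiffD : ∀ u, HasDerivAt
      (fun v => ∫ θ in (0:ℝ)..π, ∫ ψ in (0:ℝ)..(2 * π), D v θ ψ * Real.sin θ)
      (∫ θ in (0:ℝ)..π, ∫ ψ in (0:ℝ)..(2 * π), deriv (fun v => D v θ ψ) u * Real.sin θ) u) :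
    ∀ u, HasDerivAt m₀
        (-(1 / (4 * π)) * ∫ θ in (0:ℝ)..π, ∫ ψ in (0:ℝ)..(2 * π),
          ((deriv (fun v => c v θ ψ) u) ^ 2 + (deriv (fun v => d v θ ψ) u) ^ 2)
            * Real.sin θ) u
      ∧ (-(1 / (4 * π)) * ∫ θ in (0:ℝ)..π, ∫ ψ in (0:ℝ)..(2 * π),
          ((deriv (fun v => c v θ ψ) u) ^ 2 + (deriv (fun v => d v θ ψ) u) ^ 2)
            * Real.sin θ) ≤ 0 := by
  intro u
  have hcC := cont_pderiv_aux c hc u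
  have hdC := cont_pderiv_aux d hd u
  have hDC := cont_pderiv_aux D hD u
  -- continuous integrands
  have hgC : Continuous (fun q : ℝ × ℝ =>
      ((deriv (fun v => c v q.1 q.2) u) ^ 2 + (deriv (fun v => d v q.1 q.2) u) ^ 2)
        * Real.sin q.1) := by
    exact ((hcC.pow 2).add (hdC.pow 2)).mul (Real.continuous_sin.comp continuous_fst)
  have hDsC : Continuous (fun q : ℝ × ℝ =>
      deriv (fun v => D v q.1 q.2) u * Real.sin q.1) :=
    hDC.mul (Real.continuous_sin.comp continuous_fst)
  -- the D term integrates to zero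
  have hDint : (∫ θ in (0:ℝ)..π, ∫ ψ in (0:ℝ)..(2 * π),
      deriv (fun v => D v θ ψ) u * Real.sin θ) = 0 := by
    have h0 : HasDerivAt
        (fun v => ∫ θ in (0:ℝ)..π, ∫ ψ in (0:ℝ)..(2 * π), D v θ ψ * Real.sin θ) 0 u := by
      have he : (fun v => ∫ θ in (0:ℝ)..π, ∫ ψ in (0:ℝ)..(2 * π), D v θ ψ * Real.sin θ)
          = fun _ => (0:ℝ) := funext hDzero
      rw [he]; exact hasDerivAt_const u 0
    exact (hDiffD u).unique h0
  -- rewrite the M derivative integral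
  have hMint : (∫ θ in (0:ℝ)..π, ∫ ψ in (0:ℝ)..(2 * π),
        deriv (fun v => M v θ ψ) u * Real.sin θ)
      = -(∫ θ in (0:ℝ)..π, ∫ ψ in (0:ℝ)..(2 * π),
          ((deriv (fun v => c v θ ψ) u) ^ 2 + (deriv (fun v => d v θ ψ) u) ^ 2)
            * Real.sin θ) := by
    have hinner : ∀ θ : ℝ,
        (∫ ψ in (0:ℝ)..(2 * π), deriv (fun v => M v θ ψ) u * Real.sin θ)
          = -(∫ ψ in (0:ℝ)..(2 * π),
              ((deriv (fun v => c v θ ψ) u) ^ 2 + (deriv (fun v => d v θ ψ) u) ^ 2)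
                * Real.sin θ)
            + (1/2) * ∫ ψ in (0:ℝ)..(2 * π), deriv (fun v => D v θ ψ) u * Real.sin θ := by
      intro θ
      have hg1 : Continuous (fun ψ =>
          ((deriv (fun v => c v θ ψ) u) ^ 2 + (deriv (fun v => d v θ ψ) u) ^ 2)
            * Real.sin θ) := by
        have := hgC.comp (Continuous.prodMk_right θ)
        simpa [Function.comp_def] using this
      have hg2 : Continuous (fun ψ => deriv (fun v => D v θ ψ) u * Real.sin θ) := by
        have := hDsC.comp (Continuous.prodMk_right θ)
        simpa [Function.comp_def] using this
      have h1 : (∫ ψ in (0:ℝ)..(2 * π), deriv (fun v => M v θ ψ) u * Real.sin θ)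
          = ∫ ψ in (0:ℝ)..(2 * π),
              (-(((deriv (fun v => c v θ ψ) u) ^ 2 + (deriv (fun v => d v θ ψ) u) ^ 2)
                  * Real.sin θ)
               + (1/2) * (deriv (fun v => D v θ ψ) u * Real.sin θ)) := by
        apply intervalIntegral.integral_congr
        intro ψ _
        simp only [hEvol u θ ψ]; ring
      rw [h1, intervalIntegral.integral_add (hg1.fun_neg.intervalIntegrable _ _)
            ((continuous_const.fun_mul hg2).intervalIntegrable _ _),
          intervalIntegral.integral_neg, intervalIntegral.integral_const_mul]
    have hout1 : Continuous (fun θ : ℝ => ∫ ψ in (0:ℝ)..(2 * π),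
        ((deriv (fun v => c v θ ψ) u) ^ 2 + (deriv (fun v => d v θ ψ) u) ^ 2)
          * Real.sin θ) := by
      apply intervalIntegral.continuous_parametric_intervalIntegral_of_continuous'
      exact hgC
    have hout2 : Continuous (fun θ : ℝ => ∫ ψ in (0:ℝ)..(2 * π),
        deriv (fun v => D v θ ψ) u * Real.sin θ) := by
      apply intervalIntegral.continuous_parametric_intervalIntegral_of_continuous'
      exact hDsC
    calc (∫ θ in (0:ℝ)..π, ∫ ψ in (0:ℝ)..(2 * π), deriv (fun v => M v θ ψ) u * Real.sin θ)
        = ∫ θ in (0:ℝ)..π,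
            (-(∫ ψ in (0:ℝ)..(2 * π),
                ((deriv (fun v => c v θ ψ) u) ^ 2 + (deriv (fun v => d v θ ψ) u) ^ 2)
                  * Real.sin θ)
             + (1/2) * ∫ ψ in (0:ℝ)..(2 * π), deriv (fun v => D v θ ψ) u * Real.sin θ) := by
          exact intervalIntegral.integral_congr fun θ _ => hinner θ
      _ = -(∫ θ in (0:ℝ)..π, ∫ ψ in (0:ℝ)..(2 * π),
              ((deriv (fun v => c v θ ψ) u) ^ 2 + (deriv (fun v => d v θ ψ) u) ^ 2)
                * Real.sin θ)
          + (1/2) * ∫ θ in (0:ℝ)..π, ∫ ψ in (0:ℝ)..(2 * π),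
              deriv (fun v => D v θ ψ) u * Real.sin θ := by
          rw [intervalIntegral.integral_add (hout1.fun_neg.intervalIntegrable _ _)
                ((continuous_const.fun_mul hout2).intervalIntegrable _ _),
              intervalIntegral.integral_neg, intervalIntegral.integral_const_mul]
      _ = -(∫ θ in (0:ℝ)..π, ∫ ψ in (0:ℝ)..(2 * π),
              ((deriv (fun v => c v θ ψ) u) ^ 2 + (deriv (fun v => d v θ ψ) u) ^ 2)
                * Real.sin θ) := by
          rw [hDint]; ring
  -- the derivative of m₀
  have hder : HasDerivAt m₀
      (-(1 / (4 * π)) * ∫ θ in (0:ℝ)..π, ∫ ψ in (0:ℝ)..(2 * π),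
        ((deriv (fun v => c v θ ψ) u) ^ 2 + (deriv (fun v => d v θ ψ) u) ^ 2)
          * Real.sin θ) u := by
    have h := (hDiffM u).const_mul (1 / (4 * π))
    have he : (fun v => (1 / (4 * π)) *
        ∫ θ in (0:ℝ)..π, ∫ ψ in (0:ℝ)..(2 * π), M v θ ψ * Real.sin θ) = m₀ :=
      funext fun v => (hm₀ v).symm
    rw [he, hMint] at h
    exact h.congr_deriv (by ring)
  refine ⟨hder, ?_⟩
  -- nonpositivity
  have hA : 0 ≤ ∫ θ in (0:ℝ)..π, ∫ ψ in (0:ℝ)..(2 * π),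
      ((deriv (fun v => c v θ ψ) u) ^ 2 + (deriv (fun v => d v θ ψ) u) ^ 2)
        * Real.sin θ := by
    apply intervalIntegral.integral_nonneg Real.pi_nonneg
    intro θ hθ
    apply intervalIntegral.integral_nonneg (by positivity)
    intro ψ _
    have hs : 0 ≤ Real.sin θ := Real.sin_nonneg_of_mem_Icc hθ
    positivity
  have hπ : 0 < (1 / (4 * π)) := by positivity
  nlinarith
end

section
/- There is in general no single function a₂ ∈ C²(S²) satisfying simultaneously (i) ∂_θ a₂ = l and ∂_ψ a₂ = l̄ sin θ, and (ii) a₂ = 4(c c_u + d d_u)/(M_u + c_u² + d_u²), for arbitrary smooth data c, d, M on the sphere: concretely, exhibit continuous functions l, l̄, c, d, c_u, d_u, M_u on (0,π)×[0,2π] (2π-periodic in ψ, with Q = M_u + c_u² + d_u² nowhere zero and ∂_ψ l = ∂_θ(l̄ sin θ)) such that the unique-up-to-constant potential a₂ from (i) differs from the function in (ii) by a non-constant function; hence conditions (i) and (ii) cannot both hold. -/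
open Real Set

/-- In general one cannot perturb spatial infinity so that both the ADM energy and the
ADM momentum agree with the past limits of the Bondi energy-momentum: there exist
continuous data `l, l̄, c, d, c_u, d_u, M_u` on the cylinder (2π-periodic in `ψ`, with
`Q = M_u + c_u² + d_u²` nowhere zero and the compatibility condition
`∂_ψ l = ∂_θ(l̄ sin θ)`) for which no single function `a₂` satisfies both
(i) `∂_θ a₂ = l`, `∂_ψ a₂ = l̄ sin θ` and (ii) `a₂ = 4(c c_u + d d_u)/(M_u + c_u² + d_u²)`. -/
theorem no_simultaneous_perturbation :
    ∃ l lb c d cu du Mu : ℝ → ℝ → ℝ,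
      Continuous (Function.uncurry l) ∧ Continuous (Function.uncurry lb) ∧
      Continuous (Function.uncurry c) ∧ Continuous (Function.uncurry d) ∧
      Continuous (Function.uncurry cu) ∧ Continuous (Function.uncurry du) ∧
      Continuous (Function.uncurry Mu) ∧
      (∀ θ ψ, l θ (ψ + 2 * π) = l θ ψ) ∧ (∀ θ ψ, lb θ (ψ + 2 * π) = lb θ ψ) ∧
      (∀ θ ψ, c θ (ψ + 2 * π) = c θ ψ) ∧ (∀ θ ψ, d θ (ψ + 2 * π) = d θ ψ) ∧
      (∀ θ ψ, cu θ (ψ + 2 * π) = cu θ ψ) ∧ (∀ θ ψ, du θ (ψ + 2 * π) = du θ ψ) ∧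
      (∀ θ ψ, Mu θ (ψ + 2 * π) = Mu θ ψ) ∧
      (∀ θ ψ, Mu θ ψ + cu θ ψ ^ 2 + du θ ψ ^ 2 ≠ 0) ∧
      (∀ θ ∈ Ioo (0:ℝ) π, ∀ ψ : ℝ,
        deriv (fun p => l θ p) ψ = deriv (fun t => lb t ψ * Real.sin t) θ) ∧
      ¬ ∃ a₂ : ℝ → ℝ → ℝ,
          (∀ θ ∈ Ioo (0:ℝ) π, ∀ ψ : ℝ,
            HasDerivAt (fun t => a₂ t ψ) (l θ ψ) θ ∧
            HasDerivAt (fun p => a₂ θ p) (lb θ ψ * Real.sin θ) ψ) ∧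
          (∀ θ ∈ Ioo (0:ℝ) π, ∀ ψ : ℝ,
            a₂ θ ψ = 4 * (c θ ψ * cu θ ψ + d θ ψ * du θ ψ)
              / (Mu θ ψ + cu θ ψ ^ 2 + du θ ψ ^ 2)) := by
  refine ⟨fun _ _ => 0, fun _ _ => 0, fun θ _ => θ, fun _ _ => 0, fun _ _ => 1,
    fun _ _ => 0, fun _ _ => 1, continuous_const, continuous_const,
    (continuous_fst.comp ?_ : Continuous fun p : ℝ × ℝ => p.1), continuous_const,
    continuous_const, continuous_const, continuous_const,
    fun _ _ => rfl, fun _ _ => rfl, fun _ _ => rfl, fun _ _ => rfl, fun _ _ => rfl,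
    fun _ _ => rfl, fun _ _ => rfl, fun θ ψ => by norm_num, fun θ hθ ψ => by simp, ?_⟩
  · exact continuous_id
  rintro ⟨a₂, h1, h2⟩
  have hmem : (π / 2 : ℝ) ∈ Ioo (0:ℝ) π := by constructor <;> [positivity; linarith [pi_pos]]
  -- a₂ t 0 = 2 t on Ioo 0 π
  have heq : ∀ t ∈ Ioo (0:ℝ) π, a₂ t 0 = 2 * t := by
    intro t ht
    have := h2 t ht 0
    simpa using this.trans (by ring_nf)
  have hd : HasDerivAt (fun t => a₂ t 0) 2 (π / 2) := by
    have h2t : HasDerivAt (fun t : ℝ => 2 * t) 2 (π / 2) := by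
      simpa using (hasDerivAt_id (π / 2)).const_mul (2:ℝ)
    refine h2t.congr_of_eventuallyEq ?_
    filter_upwards [isOpen_Ioo.mem_nhds hmem] with t ht using heq t ht
  have hd0 : HasDerivAt (fun t => a₂ t 0) 0 (π / 2) := by
    simpa using (h1 (π / 2) hmem 0).1
  have := hd.unique hd0
  norm_num at this
end
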